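/- For a finite simple graph G on n vertices, the minimum size of a vertex cover of G² equals n plus the minimum size of an odd cycle transversal of G. -/

import Mathlib

/-- The graph `G²` on vertex set `V × Bool` (copy 1 = `false`, copy 2 = `true`):
edges `{(u,i),(v,i)}` for every edge `{u,v}` of `G`, plus `{(v,1),(v,2)}` for every `v`. -/
def doubledGraph {V : Type*} (G : SimpleGraph V) : SimpleGraph (V × Bool) where
  Adj x y := (x.2 = y.2 ∧ G.Adj x.1 y.1) ∨ (x.1 = y.1 ∧ x.2 ≠ y.2)
  symm := by
    constructor
    rintro ⟨u, i⟩ ⟨v, j⟩ (⟨h1, h2⟩ | ⟨h1, h2⟩)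
    · exact Or.inl ⟨h1.symm, h2.symm⟩
    · exact Or.inr ⟨h1.symm, h2.symm⟩
  loopless := by
    constructor
    rintro ⟨u, i⟩ (⟨_, h⟩ | ⟨_, h⟩)
    · exact G.loopless.irrefl u h
    · exact h rfl

/-- `X` is a vertex cover of `G`: it contains an endpoint of every edge. -/
def IsVertexCover {α : Type*} (G : SimpleGraph α) (X : Set α) : Prop :=
  ∀ ⦃u v : α⦄, G.Adj u v → u ∈ X ∨ v ∈ X

/-!
A vertex cover `X` of `G²` meets every rung `{(v,1),(v,2)}`, and each of its two slices
`Xᵢ = {v | (v,i) ∈ X}` is a vertex cover of `G`. So `|X| = n + |X₁ ∩ X₂|`, and outside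
`S = X₁ ∩ X₂` every vertex lies in exactly one slice; the complements of the slices are independent,
so "which slice" is a proper 2-colouring of `G - S`. Conversely, an odd cycle transversal `S`
with a 2-colouring `c` of `G - S` gives the cover `{(v,i) | v ∈ S ∨ c v = i}` of size `n + |S|`.
-/

theorem Set.ncard_eq_ncard_add_ncard_of_bool {α : Type*} [Finite α] (X : Set (α × Bool)) :
    X.ncard = {a | (a, false) ∈ X}.ncard + {a | (a, true) ∈ X}.ncard := by
  have hX : X = (·, false) '' {a | (a, false) ∈ X} ∪ (·, true) '' {a | (a, true) ∈ X} := by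
    ext ⟨a, b⟩
    cases b <;> simp
  rw [hX, Set.ncard_union_eq (by simp [Set.disjoint_left]),
    Set.ncard_image_of_injective _ (Prod.mk_left_injective _),
    Set.ncard_image_of_injective _ (Prod.mk_left_injective _)]
  simp

theorem Set.ncard_eq_card_add_ncard_inter_of_bool {α : Type*} [Fintype α] {X : Set (α × Bool)}
    (hX : ∀ a, (a, false) ∈ X ∨ (a, true) ∈ X) :
    X.ncard = Fintype.card α + ({a | (a, false) ∈ X} ∩ {a | (a, true) ∈ X}).ncard := by
  have hunion : {a | (a, false) ∈ X} ∪ {a | (a, true) ∈ X} = Set.univ :=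
    Set.eq_univ_of_forall hX
  rw [Set.ncard_eq_ncard_add_ncard_of_bool, ← Set.ncard_union_add_ncard_inter, hunion,
    Set.ncard_univ, Nat.card_eq_fintype_card]

namespace SimpleGraph

variable {V : Type*} (G : SimpleGraph V)

theorem induce_colorable_two_iff {S : Set V} :
    (G.induce S).Colorable 2 ↔ ∃ c : V → Bool, ∀ ⦃u v⦄, u ∈ S → v ∈ S → G.Adj u v → c u ≠ c v := by
  classical
  constructor
  · rintro ⟨C⟩
    let C' := (G.induce S).recolorOfEquiv finTwoEquiv C
    refine ⟨fun v => if h : v ∈ S then C' ⟨v, h⟩ else false, fun u v hu hv huv => ?_⟩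
    have hadj : (G.induce S).Adj ⟨u, hu⟩ ⟨v, hv⟩ := huv
    simpa only [dif_pos hu, dif_pos hv] using C'.valid hadj
  · rintro ⟨c, hc⟩
    exact (Coloring.mk (fun v : S => c v) fun {u v} huv => hc u.2 v.2 huv).colorable

theorem isVertexCover_doubledGraph_iff {X : Set (V × Bool)} :
    IsVertexCover (doubledGraph G) X ↔
      (∀ v, (v, false) ∈ X ∨ (v, true) ∈ X) ∧ ∀ b, IsVertexCover G {v | (v, b) ∈ X} := by
  constructor
  · intro hX
    exact ⟨fun v => hX (Or.inr ⟨rfl, Bool.false_ne_true⟩), fun b u v huv => hX (Or.inl ⟨rfl, huv⟩)⟩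
  · rintro ⟨hrung, hslice⟩ ⟨u, i⟩ ⟨v, j⟩ (⟨rfl, huv⟩ | ⟨rfl, hij⟩)
    · exact hslice i huv
    · cases i <;> cases j <;> first | exact absurd rfl hij | exact hrung u | exact (hrung u).symm

theorem colorable_induce_compl_inter_of_isVertexCover {X : Set (V × Bool)}
    (hX : IsVertexCover (doubledGraph G) X) :
    (G.induce ({v | (v, false) ∈ X} ∩ {v | (v, true) ∈ X})ᶜ).Colorable 2 := by
  classical
  obtain ⟨hrung, hslice⟩ := (G.isVertexCover_doubledGraph_iff).1 hX
  have hmiss : ∀ v, v ∈ ({v | (v, false) ∈ X} ∩ {v | (v, true) ∈ X})ᶜ →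
      (v, !decide ((v, true) ∈ X)) ∉ X := by
    intro v hv
    by_cases ht : (v, true) ∈ X <;> simp_all
  refine G.induce_colorable_two_iff.2 ⟨fun v => decide ((v, true) ∈ X), fun u v hu hv huv hc => ?_⟩
  rcases hslice (!decide ((u, true) ∈ X)) huv with h | h
  · exact hmiss u hu h
  · exact hmiss v hv (by simpa only [hc, Set.mem_ofPred_eq] using h)

theorem isVertexCover_doubledGraph_of_forall_ne {S : Set V} {c : V → Bool}
    (hc : ∀ ⦃u v⦄, u ∈ Sᶜ → v ∈ Sᶜ → G.Adj u v → c u ≠ c v) :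
    IsVertexCover (doubledGraph G) {p | p.1 ∈ S ∨ c p.1 = p.2} := by
  refine G.isVertexCover_doubledGraph_iff.2 ⟨fun v => ?_, fun b u v huv => ?_⟩
  · cases h : c v <;> simp [h]
  · by_cases hu : u ∈ S
    · exact Or.inl (Or.inl hu)
    by_cases hv : v ∈ S
    · exact Or.inr (Or.inl hv)
    have hne := hc hu hv huv
    cases b <;> cases hcu : c u <;> simp_all

variable [Fintype V]

theorem exists_colorable_ncard_eq_of_isVertexCover {X : Set (V × Bool)}
    (hX : IsVertexCover (doubledGraph G) X) :
    ∃ S : Set V, (G.induce Sᶜ).Colorable 2 ∧ X.ncard = Fintype.card V + S.ncard :=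
  ⟨_, G.colorable_induce_compl_inter_of_isVertexCover hX,
    Set.ncard_eq_card_add_ncard_inter_of_bool ((G.isVertexCover_doubledGraph_iff).1 hX).1⟩

theorem exists_isVertexCover_ncard_eq_of_colorable {S : Set V} (hS : (G.induce Sᶜ).Colorable 2) :
    ∃ X : Set (V × Bool),
      IsVertexCover (doubledGraph G) X ∧ X.ncard = Fintype.card V + S.ncard := by
  obtain ⟨c, hc⟩ := G.induce_colorable_two_iff.1 hS
  have hX := G.isVertexCover_doubledGraph_of_forall_ne hc
  refine ⟨_, hX, ?_⟩
  have hS : {v | (v, false) ∈ {p : V × Bool | p.1 ∈ S ∨ c p.1 = p.2}} ∩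
      {v | (v, true) ∈ {p : V × Bool | p.1 ∈ S ∨ c p.1 = p.2}} = S := by
    ext v
    cases h : c v <;> simp [h]
  rw [Set.ncard_eq_card_add_ncard_inter_of_bool ((G.isVertexCover_doubledGraph_iff).1 hX).1, hS]

end SimpleGraph

/-- The minimum size of a vertex cover of `G²` equals `n` plus the minimum size of an odd
cycle transversal of `G`. -/
theorem stmt6 {V : Type*} [Fintype V] (G : SimpleGraph V) :
    sInf {m : ℕ | ∃ X : Set (V × Bool), IsVertexCover (doubledGraph G) X ∧ X.ncard = m}
      = Fintype.card V +
        sInf {m : ℕ | ∃ S : Set V, (G.induce (Sᶜ : Set V)).Colorable 2 ∧ S.ncard = m} := by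
  have hoct : {m : ℕ | ∃ S : Set V, (G.induce (Sᶜ : Set V)).Colorable 2 ∧ S.ncard = m}.Nonempty :=
    ⟨_, Set.univ,
      G.induce_colorable_two_iff.2 ⟨fun _ => false, fun _ _ hu => absurd trivial hu⟩, rfl⟩
  have hcover : {m : ℕ | ∃ X : Set (V × Bool), IsVertexCover (doubledGraph G) X ∧ X.ncard = m} =
      (Fintype.card V + ·) ''
        {m : ℕ | ∃ S : Set V, (G.induce (Sᶜ : Set V)).Colorable 2 ∧ S.ncard = m} := by
    ext m
    constructor
    · rintro ⟨X, hX, rfl⟩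
      obtain ⟨S, hS, hcard⟩ := G.exists_colorable_ncard_eq_of_isVertexCover hX
      exact ⟨S.ncard, ⟨S, hS, rfl⟩, hcard.symm⟩
    · rintro ⟨_, ⟨S, hS, rfl⟩, rfl⟩
      exact G.exists_isVertexCover_ncard_eq_of_colorable hS
  rw [hcover, ← add_right_mono.map_csInf hoct]
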